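/- For every γ > 0 there exists a constant p(γ) < 1/2 with the following properties. (1) For every k and every k-portfolio 1 ≥ x_1 > ... > x_k > 0 that satisfies the FOC recurrence x_{i+1} = 2x_i - x_{i-1} + γ(2x_i - 3x_i²) (with x_0 = 1, x_{k+1} = 0) and such that removing any single school does not increase U_γ, the true expected payoff satisfies Σ_{i=1}^k x_i(x_{i-1} - x_i) ≤ p(γ). Explicitly, one may take p(γ) = 1/2 - (1-c)²/(2(m(γ,c)+1)) for any fixed c ∈ (0,2/3), where m(γ,c) = 2 + 1/(3γ) + (2/3-c)/√(γc²(1-c)) for 0 < γ < 1/3 and m(γ,c) = 2 + (2/3-c)/√(γc²(1-c)) for γ ≥ 1/3. (2) Consequently there exists k₀ ∈ ℕ (namely any k₀ > 2p(γ)/(1-2p(γ))) with k₀/(2(k₀+1)) > p(γ): a rational student restricted to k₀ applications achieves strictly higher true expected payoff than a γ-biased student with any number of applications. -/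

import Mathlib

open Finset

/-- Perceived expected utility of the k-portfolio `x 1 > x 2 > ⋯ > x k`
(with the convention `x 0 = 1`). -/
noncomputable def U (γ : ℝ) (k : ℕ) (x : ℕ → ℝ) : ℝ :=
  ∑ i ∈ Finset.Icc 1 k, (-γ * (1 - x i) * (x i) ^ 2 + x i * (x (i - 1) - x i))

/-- The (k-1)-portfolio obtained from `x` by dropping the i-th school. -/
def dropAt (x : ℕ → ℝ) (i : ℕ) : ℕ → ℝ :=
  fun j => if j < i then x j else x (j + 1)

/-!
Write `d j = x (j - 1) - x j` for the gaps, with `x 0 = 1` and `x (k + 1) = 0`. Summation by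
parts gives `2 · payoff = 1 - ∑_{j=1}^{k+1} d j ²`, so it suffices to find one gap with
`d j ² ≥ ε := min (1/144) (γ/10)`. Dropping school `i` changes the perceived utility by
`-γ (1 - x i) x i ² + d i · d (i+1)`, so no-improvement-by-dropping says
`γ (1 - x i) x i ² ≤ d i · d (i+1)`. Take the last index `I ≤ k` with `x I ≥ 1/2` (possibly
`I = 0`). If `x I > 7/12` the next gap exceeds `1/12`; otherwise `(1 - x I) x I ² ≥ 1/10`, so one
of `d I`, `d (I+1)` has square at least `γ/10`.
-/

lemma U_succ (γ : ℝ) (k : ℕ) (x : ℕ → ℝ) :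
    U γ (k + 1) x =
      U γ k x + (-γ * (1 - x (k + 1)) * x (k + 1) ^ 2 + x (k + 1) * (x k - x (k + 1))) := by
  rw [U, sum_Icc_succ_top (by omega), ← U, Nat.add_sub_cancel]

lemma two_mul_sum_mul_sub_eq (x : ℕ → ℝ) (k : ℕ) :
    2 * ∑ i ∈ Icc 1 k, x i * (x (i - 1) - x i) =
      x 0 ^ 2 - x k ^ 2 - ∑ i ∈ Icc 1 k, (x (i - 1) - x i) ^ 2 := by
  induction k with
  | zero => simp
  | succ n ih =>
    rw [sum_Icc_succ_top (by omega), sum_Icc_succ_top (by omega), Nat.add_sub_cancel]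
    linear_combination ih

section

variable {γ : ℝ} {x : ℕ → ℝ}

lemma dropAt_of_lt {i j : ℕ} (h : j < i) : dropAt x i j = x j := if_pos h

lemma dropAt_of_le {i j : ℕ} (h : i ≤ j) : dropAt x i j = x (j + 1) := if_neg (by omega)

lemma U_dropAt_of_lt {i m : ℕ} (h : m < i) : U γ m (dropAt x i) = U γ m x :=
  sum_congr rfl fun j hj => by
    rw [mem_Icc] at hj
    rw [dropAt_of_lt (by omega : j < i), dropAt_of_lt (by omega : j - 1 < i)]

lemma U_sub_U_dropAt_self {k : ℕ} (hk : 1 ≤ k) :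
    U γ k x - U γ (k - 1) (dropAt x k) =
      -γ * (1 - x k) * x k ^ 2 + x k * (x (k - 1) - x k) := by
  obtain ⟨m, rfl⟩ : ∃ m, k = m + 1 := ⟨k - 1, by omega⟩
  rw [Nat.add_sub_cancel, U_dropAt_of_lt (Nat.lt_succ_self m), U_succ]
  ring

lemma U_sub_U_dropAt_of_lt {i k : ℕ} (hi : 1 ≤ i) (hik : i < k) :
    U γ k x - U γ (k - 1) (dropAt x i) =
      -γ * (1 - x i) * x i ^ 2 + (x (i - 1) - x i) * (x i - x (i + 1)) := by
  obtain ⟨m, rfl⟩ : ∃ m, i = m + 1 := ⟨i - 1, by omega⟩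
  induction k, hik using Nat.le_induction with
  | base =>
    rw [Nat.succ_sub_one, U_succ (k := m + 1), U_succ, U_succ (x := dropAt x (m + 1)),
      U_dropAt_of_lt (Nat.lt_succ_self m), dropAt_of_le le_rfl, dropAt_of_lt (Nat.lt_succ_self m),
      Nat.add_sub_cancel]
    ring
  | succ k hk ih =>
    obtain ⟨n, rfl⟩ : ∃ n, k = n + 1 := ⟨k - 1, by omega⟩
    rw [Nat.add_sub_cancel] at ih ⊢
    rw [U_succ (k := n + 1), U_succ (x := dropAt x (m + 1)), dropAt_of_le (by omega : m + 1 ≤ n),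
      dropAt_of_le (by omega : m + 1 ≤ n + 1)]
    linarith

lemma mul_le_gap_mul_gap_of_U_dropAt_le {k i : ℕ} (hxk : x (k + 1) = 0) (hi : 1 ≤ i)
    (hik : i ≤ k) (hU : U γ (k - 1) (dropAt x i) ≤ U γ k x) :
    γ * (1 - x i) * x i ^ 2 ≤ (x (i - 1) - x i) * (x i - x (i + 1)) := by
  rcases hik.lt_or_eq with hik | rfl
  · linarith [U_sub_U_dropAt_of_lt (γ := γ) (x := x) hi hik]
  · rw [hxk]
    linarith [U_sub_U_dropAt_self (γ := γ) (x := x) hi]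

lemma exists_le_lt_succ_of_lt {c : ℝ} {n : ℕ} (h0 : c ≤ x 0) (hn : x n < c) :
    ∃ I < n, c ≤ x I ∧ x (I + 1) < c := by
  induction n with
  | zero => exact absurd h0 hn.not_ge
  | succ n ih =>
    by_cases hc : c ≤ x n
    · exact ⟨n, Nat.lt_succ_self n, hc, hn⟩
    · obtain ⟨I, hI, hcI⟩ := ih (not_le.mp hc)
      exact ⟨I, hI.trans (Nat.lt_succ_self n), hcI⟩

lemma exists_sq_gap_ge (hγ : 0 ≤ γ) {k : ℕ} (hx0 : x 0 = 1) (hxk : x (k + 1) = 0)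
    (hanti : ∀ j ≤ k, x (j + 1) ≤ x j)
    (hdrop : ∀ i, 1 ≤ i → i ≤ k →
      γ * (1 - x i) * x i ^ 2 ≤ (x (i - 1) - x i) * (x i - x (i + 1))) :
    ∃ j ≤ k, min (1 / 144) (γ / 10) ≤ (x j - x (j + 1)) ^ 2 := by
  obtain ⟨I, hIk, hxI, hxI1⟩ :=
    exists_le_lt_succ_of_lt (x := x) (c := 1 / 2) (n := k + 1) (by norm_num [hx0])
      (by norm_num [hxk])
  have hε := min_le_left (1 / 144 : ℝ) (γ / 10)
  by_cases hbig : 7 / 12 < x I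
  · exact ⟨I, by omega, by nlinarith⟩
  have hI0 : I ≠ 0 := by
    rintro rfl
    norm_num [hx0] at hbig
  obtain ⟨m, rfl⟩ := Nat.exists_eq_succ_of_ne_zero hI0
  have hprod : γ / 10 ≤ (x m - x (m + 1)) * (x (m + 1) - x (m + 2)) := by
    have hcubic : 1 / 10 ≤ (1 - x (m + 1)) * x (m + 1) ^ 2 := by nlinarith
    have := hdrop (m + 1) (by omega) (by omega)
    rw [Nat.add_sub_cancel] at this
    nlinarith
  have ha := hanti m (by omega)
  have hb := hanti (m + 1) (by omega)
  have hε' := min_le_right (1 / 144 : ℝ) (γ / 10)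
  rcases le_total (x m - x (m + 1)) (x (m + 1) - x (m + 2)) with hle | hle
  · exact ⟨m + 1, by omega, by nlinarith⟩
  · exact ⟨m, by omega, by nlinarith⟩

lemma sq_gap_le_sq_add_sum_sq_gap {k j : ℕ} (hxk : x (k + 1) = 0) (hj : j ≤ k) :
    (x j - x (j + 1)) ^ 2 ≤ x k ^ 2 + ∑ i ∈ Icc 1 k, (x (i - 1) - x i) ^ 2 := by
  have hnonneg : 0 ≤ ∑ i ∈ Icc 1 k, (x (i - 1) - x i) ^ 2 := sum_nonneg fun _ _ => sq_nonneg _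
  rcases hj.lt_or_eq with hjk | rfl
  · have hmem : j + 1 ∈ Icc 1 k := mem_Icc.mpr ⟨by omega, by omega⟩
    have := single_le_sum (f := fun i => (x (i - 1) - x i) ^ 2) (fun _ _ => sq_nonneg _) hmem
    rw [Nat.add_sub_cancel] at this
    nlinarith [sq_nonneg (x k)]
  · rw [hxk, sub_zero]
    linarith

end

lemma exists_lt_div_two_mul_succ {ε : ℝ} (hε : 0 < ε) :
    ∃ n : ℕ, (1 - ε) / 2 < n / (2 * (n + 1)) := by
  obtain ⟨n, hn⟩ := exists_nat_gt (1 / ε)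
  refine ⟨n, ?_⟩
  have hεn : 1 < ε * n := by rwa [div_lt_iff₀ hε, mul_comm] at hn
  rw [div_lt_div_iff₀ two_pos (by positivity)]
  nlinarith

/-- For every γ > 0 there is a constant `p(γ) < 1/2` such that
(1) every portfolio (of any size k) satisfying the FOC recurrence and the
no-improvement-by-dropping property has true expected payoff at most `p(γ)`; and
(2) there is a number of applications `k₀` for which a rational student's optimal
payoff `k₀/(2(k₀+1))` strictly exceeds `p(γ)`. -/
theorem stmt_12 (γ : ℝ) (hγ : 0 < γ) :
    ∃ p : ℝ, p < 1 / 2 ∧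
      (∀ (k : ℕ) (x : ℕ → ℝ), 1 ≤ k →
        x 0 = 1 → x (k + 1) = 0 → x 1 ≤ 1 →
        (∀ i, 1 ≤ i → i < k → x (i + 1) < x i) → 0 < x k →
        (∀ i, 1 ≤ i → i ≤ k →
          x (i + 1) = 2 * x i - x (i - 1) + γ * (2 * x i - 3 * (x i) ^ 2)) →
        (∀ i, 1 ≤ i → i ≤ k → U γ (k - 1) (dropAt x i) ≤ U γ k x) →
        ∑ i ∈ Finset.Icc 1 k, x i * (x (i - 1) - x i) ≤ p) ∧
      (∃ k₀ : ℕ, p < (k₀ : ℝ) / (2 * ((k₀ : ℝ) + 1))) := by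
  have hε : 0 < min (1 / 144 : ℝ) (γ / 10) := lt_min (by norm_num) (by linarith)
  refine ⟨(1 - min (1 / 144) (γ / 10)) / 2, by linarith, ?_, exists_lt_div_two_mul_succ hε⟩
  intro k x _ hx0 hxk hx1 hdec hxk_pos _ hU
  have hanti : ∀ j ≤ k, x (j + 1) ≤ x j := by
    intro j hj
    rcases Nat.eq_zero_or_pos j with rfl | hj0
    · rwa [hx0]
    rcases hj.lt_or_eq with hjk | rfl
    · exact (hdec j hj0 hjk).le
    · rw [hxk]
      exact hxk_pos.le
  obtain ⟨j, hjk, hj⟩ := exists_sq_gap_ge hγ.le hx0 hxk hanti fun i hi hik =>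
    mul_le_gap_mul_gap_of_U_dropAt_le hxk hi hik (hU i hi hik)
  have hpayoff := two_mul_sum_mul_sub_eq x k
  have hgap := sq_gap_le_sq_add_sum_sq_gap hxk hjk
  rw [hx0] at hpayoff
  linarith
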